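/- Let f(α, r) = ψ₀(1 − α) + 2γ + 1/(2α) − ln α + ln r, where ψ₀ is the digamma function and γ Euler's constant. Then for every r ∈ (0,1) and every positive integer k, there exists a unique α_k ∈ (k−1, k) with f(α_k, r) = 0, and f(·, r) is strictly decreasing on (k−1, k). -/

import Mathlib

open Real Set

/-- The digamma function `ψ₀`, the logarithmic derivative of the Gamma
function. -/
noncomputable def digamma (x : ℝ) : ℝ := deriv (fun t => Real.log (Real.Gamma t)) x

/-- The quantization function `f(α, r) = ψ₀(1−α) + 2γ + 1/(2α) − ln α + ln r`. -/
noncomputable def quantF (α r : ℝ) : ℝ :=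
  digamma (1 - α) + 2 * Real.eulerMascheroniConstant + 1 / (2 * α) - Real.log α + Real.log r

/-!
On `(n, n + 1)`, iterating `ψ(x + 1) = ψ(x) + 1/x` gives
`ψ(1 - α) = ψ(n + 2 - α) - ∑_{i ≤ n} 1/(1 - α + i)`. Log-convexity of `Γ` makes `ψ` increasing
on `(0, ∞)`, and each `1/(1 - α + i)` keeps its sign on the interval, so `α ↦ ψ(1 - α)` is
antitone there, while `1/(2α) - log α` is strictly decreasing. The same formula shows that `f`
is large and positive near `n` (through `1/(2α)` if `n = 0`, through the term `i = n - 1`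
otherwise) and large and negative near `n + 1` (through the term `i = n`). A zero then exists by
Darboux's theorem, and it is unique by monotonicity.
-/

open Filter Topology Finset

lemma hasDerivAt_log_Gamma {x : ℝ} (hx : ∀ m : ℕ, x ≠ -m) :
    HasDerivAt (fun t => log (Gamma t)) (digamma x) x :=
  ((differentiableAt_Gamma hx).log (Gamma_ne_zero hx)).hasDerivAt

lemma add_nat_ne_neg_nat {x : ℝ} (hx : ∀ m : ℕ, x ≠ -m) (n m : ℕ) : x + n ≠ -m := by
  intro h
  exact hx (m + n) (by push_cast; linarith)

lemma digamma_add_one {x : ℝ} (hx : ∀ m : ℕ, x ≠ -m) :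
    digamma (x + 1) = digamma x + x⁻¹ := by
  have hx0 : x ≠ 0 := by simpa using hx 0
  have hshift : HasDerivAt (fun t => log (Gamma (t + 1))) (digamma (x + 1)) x := by
    simpa using (hasDerivAt_log_Gamma (by simpa using add_nat_ne_neg_nat hx 1)).comp_add_const x 1
  have hsplit : (fun t => log (Gamma (t + 1))) =ᶠ[𝓝 x] fun t => log t + log (Gamma t) := by
    filter_upwards [eventually_ne_nhds hx0,
      (differentiableAt_Gamma hx).continuousAt.eventually_ne (Gamma_ne_zero hx)] with t ht hΓ
    rw [Gamma_add_one ht, log_mul ht hΓ]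
  refine hshift.unique ?_
  rw [add_comm]
  exact ((hasDerivAt_log hx0).add (hasDerivAt_log_Gamma hx)).congr_of_eventuallyEq hsplit

lemma digamma_add_nat {x : ℝ} (hx : ∀ m : ℕ, x ≠ -m) (n : ℕ) :
    digamma (x + n) = digamma x + ∑ i ∈ range n, (x + i)⁻¹ := by
  induction n with
  | zero => simp
  | succ n ih =>
    rw [Nat.cast_succ, ← add_assoc, digamma_add_one (add_nat_ne_neg_nat hx n), ih,
      sum_range_succ, add_assoc]

lemma digamma_monotoneOn : MonotoneOn digamma (Ioi 0) :=
  convexOn_log_Gamma.monotoneOn_deriv fun _ hx =>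
    (hasDerivAt_log_Gamma fun m h =>
      (neg_nonpos.2 m.cast_nonneg).not_gt (h ▸ hx : (0 : ℝ) < -m)).differentiableAt

section Interval

variable {n : ℕ} {α : ℝ}

lemma one_sub_ne_neg_nat (hα : α ∈ Ioo (n : ℝ) (n + 1)) (m : ℕ) : 1 - α ≠ -m := by
  intro h
  obtain ⟨h₁, h₂⟩ := hα
  have h₁' : n < m + 1 := by exact_mod_cast (show (n : ℝ) < m + 1 by linarith)
  have h₂' : m + 1 < n + 1 := by exact_mod_cast (show (m : ℝ) + 1 < n + 1 by linarith)
  omega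

lemma digamma_one_sub_eq (hα : α ∈ Ioo (n : ℝ) (n + 1)) :
    digamma (1 - α) = digamma (n + 2 - α) - ∑ i ∈ range (n + 1), (1 - α + i)⁻¹ := by
  rw [eq_sub_iff_add_eq, ← digamma_add_nat (one_sub_ne_neg_nat hα)]
  push_cast
  ring_nf

lemma inv_one_sub_add_le_of_le {a b : ℝ} (ha : a ∈ Ioo (n : ℝ) (n + 1))
    (hb : b ∈ Ioo (n : ℝ) (n + 1)) (hab : a ≤ b) {i : ℕ} (hi : i < n + 1) :
    (1 - a + i)⁻¹ ≤ (1 - b + i)⁻¹ := by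
  rcases Nat.lt_succ_iff_lt_or_eq.mp hi with hi | rfl
  · have hi' : (i : ℝ) + 1 ≤ n := by exact_mod_cast hi
    exact (inv_le_inv_of_neg (by linarith [ha.1]) (by linarith [hb.1])).2 (by linarith)
  · exact inv_anti₀ (by linarith [hb.2]) (by linarith)

end Interval

lemma digamma_one_sub_antitoneOn (n : ℕ) :
    AntitoneOn (fun α => digamma (1 - α)) (Ioo (n : ℝ) (n + 1)) := by
  intro a ha b hb hab
  simp only [digamma_one_sub_eq ha, digamma_one_sub_eq hb]
  have hψ : digamma (n + 2 - b) ≤ digamma (n + 2 - a) :=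
    digamma_monotoneOn (by linarith [hb.2] : (0 : ℝ) < n + 2 - b)
      (by linarith [ha.2] : (0 : ℝ) < n + 2 - a) (by linarith)
  have hsum : ∑ i ∈ range (n + 1), (1 - a + i)⁻¹ ≤ ∑ i ∈ range (n + 1), (1 - b + i)⁻¹ :=
    sum_le_sum fun i hi => inv_one_sub_add_le_of_le ha hb hab (mem_range.1 hi)
  linarith

lemma quantF_strictAntiOn (n : ℕ) (r : ℝ) :
    StrictAntiOn (fun α => quantF α r) (Ioo (n : ℝ) (n + 1)) := by
  intro a ha b hb hab
  have ha0 : 0 < a := n.cast_nonneg.trans_lt ha.1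
  have hψ := digamma_one_sub_antitoneOn n ha hb hab.le
  have hinv : 1 / (2 * b) < 1 / (2 * a) := one_div_lt_one_div_of_lt (by positivity) (by linarith)
  have hlog := log_lt_log ha0 hab
  simp only [quantF]
  linarith

/-- Darboux's theorem applied to this antiderivative gives the intermediate value property of
`quantF · r` without proving `digamma` continuous. -/
noncomputable def quantFPrimitive (r α : ℝ) : ℝ :=
  -log (Gamma (1 - α)) + (2 * eulerMascheroniConstant + log r) * α + log α / 2 + (α - α * log α)

lemma hasDerivAt_quantFPrimitive (r : ℝ) {α : ℝ} (hα : 0 < α) (h1α : ∀ m : ℕ, 1 - α ≠ -m) :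
    HasDerivAt (quantFPrimitive r) (quantF α r) α := by
  have hΓ : HasDerivAt (fun β => log (Gamma (1 - β))) (-digamma (1 - α)) α :=
    (hasDerivAt_log_Gamma h1α).comp_const_sub 1 α
  have h := ((hΓ.fun_neg.fun_add
    ((hasDerivAt_id' α).const_mul (2 * eulerMascheroniConstant + log r))).fun_add
    ((hasDerivAt_log hα.ne').div_const 2)).fun_add
    ((hasDerivAt_id' α).fun_sub (hasDerivAt_mul_log hα.ne'))
  refine h.congr_deriv ?_
  simp only [quantF]
  field_simp
  ring

lemma exists_quantF_eq_zero {n : ℕ} {r a b : ℝ} (ha : a ∈ Ioo (n : ℝ) (n + 1))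
    (hb : b ∈ Ioo (n : ℝ) (n + 1)) (hpos : 0 < quantF a r) (hneg : quantF b r < 0) :
    ∃ c ∈ Ioo (n : ℝ) (n + 1), quantF c r = 0 := by
  have hderiv (x : ℝ) (hx : x ∈ Ioo (n : ℝ) (n + 1)) :
      HasDerivWithinAt (quantFPrimitive r) (quantF x r) (Ioo (n : ℝ) (n + 1)) x :=
    (hasDerivAt_quantFPrimitive r (n.cast_nonneg.trans_lt hx.1)
      (one_sub_ne_neg_nat hx)).hasDerivWithinAt
  exact (ordConnected_Ioo.image_hasDerivWithinAt hderiv).out ⟨b, hb, rfl⟩ ⟨a, ha, rfl⟩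
    ⟨hneg.le, hpos.le⟩

lemma inv_two_mul_le_sub_sum_inv (n : ℕ) {δ : ℝ} (hδ : 0 < δ) :
    (2 * δ)⁻¹ ≤ (2 * (n + δ))⁻¹ - ∑ i ∈ range n, (1 - (n + δ) + i)⁻¹ := by
  cases n with
  | zero => simp
  | succ m =>
    have hlast : (1 - ((m + 1 : ℕ) + δ) + m)⁻¹ = -δ⁻¹ := by
      push_cast
      rw [← inv_neg]
      ring_nf
    have hrest : ∑ i ∈ range m, (1 - ((m + 1 : ℕ) + δ) + i)⁻¹ ≤ 0 := by
      refine sum_nonpos fun i hi => inv_nonpos.2 ?_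
      have hi' : (i : ℝ) + 1 ≤ m := by exact_mod_cast mem_range.1 hi
      push_cast
      linarith
    have hhalf : (2 * δ)⁻¹ ≤ δ⁻¹ := inv_anti₀ hδ (by linarith)
    have hfirst : 0 ≤ (2 * ((m + 1 : ℕ) + δ))⁻¹ := by positivity
    rw [sum_range_succ, hlast]
    linarith

lemma le_quantF_nat_add (n : ℕ) (r : ℝ) {δ : ℝ} (hδ : 0 < δ) (hδ' : δ ≤ 1 / 2) :
    (2 * δ)⁻¹ + digamma 1 - 2 + 2 * eulerMascheroniConstant - log (n + 1) + log r
      ≤ quantF (n + δ) r := by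
  have hα : (n : ℝ) + δ ∈ Ioo (n : ℝ) (n + 1) := ⟨by linarith, by linarith⟩
  have hψ : digamma 1 ≤ digamma (n + 2 - (n + δ)) :=
    digamma_monotoneOn (mem_Ioi.2 one_pos) (by linarith : (0 : ℝ) < n + 2 - (n + δ))
      (by linarith)
  have hlast : (1 - (n + δ) + n)⁻¹ ≤ (2 : ℝ) := by
    rw [inv_le_comm₀ (by linarith) two_pos]
    linarith
  have hlog : log (n + δ) ≤ log (n + 1) := log_le_log (by positivity) (by linarith)
  have hsing := inv_two_mul_le_sub_sum_inv n hδ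
  rw [quantF, digamma_one_sub_eq hα, sum_range_succ, one_div]
  linarith

lemma quantF_nat_add_one_sub_le (n : ℕ) (r : ℝ) {ε : ℝ} (hε : 0 < ε) (hε' : ε ≤ 1 / 2) :
    quantF (n + 1 - ε) r
      ≤ digamma 2 - ε⁻¹ + 2 * n + 2 * eulerMascheroniConstant + 1 + log 2 + log r := by
  have hα : (n : ℝ) + 1 - ε ∈ Ioo (n : ℝ) (n + 1) := ⟨by linarith, by linarith⟩
  have hψ : digamma (n + 2 - (n + 1 - ε)) ≤ digamma 2 :=
    digamma_monotoneOn (by linarith : (0 : ℝ) < n + 2 - (n + 1 - ε)) (mem_Ioi.2 two_pos)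
      (by linarith)
  have hlast : (1 - (n + 1 - ε) + n)⁻¹ = ε⁻¹ := by ring_nf
  have hrest : -2 * (n : ℝ) ≤ ∑ i ∈ range n, (1 - (n + 1 - ε) + i)⁻¹ := by
    have hterm (i : ℕ) (hi : i ∈ range n) : (-2 : ℝ) ≤ (1 - (n + 1 - ε) + i)⁻¹ := by
      have hi' : (i : ℝ) + 1 ≤ n := by exact_mod_cast mem_range.1 hi
      have h := (inv_le_inv_of_neg (by norm_num : (-1 / 2 : ℝ) < 0) (by linarith)).2
        (by linarith : 1 - (n + 1 - ε) + i ≤ -1 / 2)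
      norm_num at h
      linarith
    simpa [mul_comm] using card_nsmul_le_sum _ _ _ hterm
  have hα0 : (1 : ℝ) / 2 ≤ n + 1 - ε := by linarith [n.cast_nonneg (α := ℝ)]
  have hinv : 1 / (2 * (n + 1 - ε)) ≤ (1 : ℝ) := by
    rw [div_le_one (by linarith)]
    linarith
  have hlog : -log 2 ≤ log (n + 1 - ε) := by
    rw [← log_inv, ← one_div]
    exact log_le_log (by norm_num) hα0
  rw [quantF, digamma_one_sub_eq hα, sum_range_succ, hlast]
  linarith

lemma exists_quantF_pos (n : ℕ) (r : ℝ) : ∃ a ∈ Ioo (n : ℝ) (n + 1), 0 < quantF a r := by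
  set C := digamma 1 - 2 + 2 * eulerMascheroniConstant - log (n + 1) + log r
  set δ : ℝ := (2 * (|C| + 1))⁻¹
  have hC : 0 < |C| + 1 := by positivity
  have hδ : 0 < δ := by positivity
  have hδ' : δ ≤ 1 / 2 := by
    rw [one_div]
    exact inv_anti₀ two_pos (by linarith [abs_nonneg C])
  have hsing : (2 * δ)⁻¹ = |C| + 1 := by
    simp only [δ]
    field_simp
  refine ⟨n + δ, ⟨by linarith, by linarith⟩, ?_⟩
  have h := le_quantF_nat_add n r hδ hδ'
  linarith [neg_abs_le C]

lemma exists_quantF_neg (n : ℕ) (r : ℝ) : ∃ b ∈ Ioo (n : ℝ) (n + 1), quantF b r < 0 := by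
  set C := digamma 2 + 2 * n + 2 * eulerMascheroniConstant + 1 + log 2 + log r
  set ε : ℝ := (|C| + 2)⁻¹
  have hε : 0 < ε := by positivity
  have hε' : ε ≤ 1 / 2 := by
    rw [one_div]
    exact inv_anti₀ two_pos (by linarith [abs_nonneg C])
  refine ⟨n + 1 - ε, ⟨by linarith, by linarith⟩, ?_⟩
  have h := quantF_nat_add_one_sub_le n r hε hε'
  rw [inv_inv] at h
  linarith [le_abs_self C]

/-- For every `r ∈ (0,1)` and every positive integer `k`, the function
`f(·, r)` is strictly decreasing on `(k−1, k)` and has a unique zero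
`α_k ∈ (k−1, k)`. -/
theorem quantF_unique_zero :
    ∀ r : ℝ, 0 < r → r < 1 → ∀ k : ℕ, 0 < k →
      StrictAntiOn (fun α => quantF α r) (Ioo ((k : ℝ) - 1) (k : ℝ)) ∧
      ∃! α : ℝ, α ∈ Ioo ((k : ℝ) - 1) (k : ℝ) ∧ quantF α r = 0 := by
  intro r _ _ k hk
  obtain ⟨n, rfl⟩ := Nat.exists_eq_add_one_of_ne_zero hk.ne'
  rw [Nat.cast_add_one, add_sub_cancel_right]
  have hanti := quantF_strictAntiOn n r
  obtain ⟨a, ha, hpos⟩ := exists_quantF_pos n r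
  obtain ⟨b, hb, hneg⟩ := exists_quantF_neg n r
  obtain ⟨c, hc, hc0⟩ := exists_quantF_eq_zero ha hb hpos hneg
  exact ⟨hanti, c, ⟨hc, hc0⟩, fun d ⟨hd, hd0⟩ => hanti.injOn hd hc (hd0.trans hc0.symm)⟩
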